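/- If an infinite compactification K contains a sequence (xₙ)ₙ of pairwise distinct isolated points of K converging to a point of K, then G_{K',K} ≠ FS_{K'}. -/

import Mathlib

open Set Filter Topology

universe u u₁ u₂ v w

section CoarsePreamble

variable {X : Type u}

/-- An entourage on `X` is a subset of `X × X` containing the diagonal. -/
def IsEntourage (E : Set (X × X)) : Prop := ∀ x : X, (x, x) ∈ E

/-- Composition `E ∘ F` of two entourages. -/
def entComp (E F : Set (X × X)) : Set (X × X) :=
  {p | ∃ y : X, (p.1, y) ∈ E ∧ (y, p.2) ∈ F}

/-- Inverse `E⁻¹` of an entourage. -/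
def entInv (E : Set (X × X)) : Set (X × X) := {p | (p.2, p.1) ∈ E}

/-- The `E`-ball `E[x]` centered at `x`. -/
def entBall (E : Set (X × X)) (x : X) : Set X := {y | (x, y) ∈ E}

/-- A coarse structure on `X`: a family of entourages covering `X × X`, closed under
`E ∘ F⁻¹` up to enlargement, and downward closed among entourages. -/
structure IsCoarseStructure (𝓔 : Set (Set (X × X))) : Prop where
  ent : ∀ E ∈ 𝓔, IsEntourage E
  cover : ∀ p : X × X, ∃ E ∈ 𝓔, p ∈ E
  comp_subset : ∀ E ∈ 𝓔, ∀ F ∈ 𝓔, ∃ G ∈ 𝓔, entComp E (entInv F) ⊆ G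
  downward : ∀ E F : Set (X × X), IsEntourage E → E ⊆ F → F ∈ 𝓔 → E ∈ 𝓔

/-- A set `B` is bounded in the coarse space `(X, 𝓔)` if `B ⊆ E[x]` for some `E ∈ 𝓔`, `x ∈ X`. -/
def IsBoundedSet (𝓔 : Set (Set (X × X))) (B : Set X) : Prop :=
  ∃ E ∈ 𝓔, ∃ x : X, B ⊆ entBall E x

/-- A coarse structure is finitary if the cardinalities of balls of each entourage
are uniformly finite. -/
def IsFinitaryCoarse (𝓔 : Set (Set (X × X))) : Prop :=
  ∀ E ∈ 𝓔, ∃ n : ℕ, ∀ x : X, (entBall E x).Finite ∧ (entBall E x).ncard ≤ n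

/-- `d : X → X → ℝ` is a metric. -/
structure IsMetricOn (d : X → X → ℝ) : Prop where
  refl : ∀ x, d x x = 0
  eq_of : ∀ x y, d x y = 0 → x = y
  symm : ∀ x y, d x y = d y x
  triangle : ∀ x y z, d x z ≤ d x y + d y z

/-- A coarse structure is metrizable if it is the coarse structure of some metric on `X`,
i.e. consists of all entourages of uniformly bounded `d`-diameter. -/
def IsMetrizableCoarse (𝓔 : Set (Set (X × X))) : Prop :=
  ∃ d : X → X → ℝ, IsMetricOn d ∧
    𝓔 = {E | IsEntourage E ∧ ∃ n : ℕ, ∀ p ∈ E, d p.1 p.2 ≤ (n : ℝ)}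

/-- A cellular entourage: a symmetric and transitive entourage (an equivalence relation). -/
def IsCellularEnt (E : Set (X × X)) : Prop :=
  (∀ p : X × X, p ∈ E → (p.2, p.1) ∈ E) ∧
    ∀ x y z : X, (x, y) ∈ E → (y, z) ∈ E → (x, z) ∈ E

/-- `𝓑` is a base of the coarse structure `𝓔`. -/
def IsCoarseBase (𝓔 𝓑 : Set (Set (X × X))) : Prop :=
  𝓑 ⊆ 𝓔 ∧ ∀ E ∈ 𝓔, ∃ B ∈ 𝓑, E ⊆ B

/-- A coarse structure is cellular if it has a base of cellular entourages. -/
def IsCellularCoarse (𝓔 : Set (Set (X × X))) : Prop :=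
  ∃ 𝓑 : Set (Set (X × X)), IsCoarseBase 𝓔 𝓑 ∧ ∀ B ∈ 𝓑, IsCellularEnt B

/-- A subset `D` is `𝓔`-discrete (thin). -/
def IsCoarseDiscrete (𝓔 : Set (Set (X × X))) (D : Set X) : Prop :=
  ∀ E ∈ 𝓔, ∃ B : Set X, IsBoundedSet 𝓔 B ∧ ∀ x ∈ D \ B, D ∩ entBall E x = {x}

/-- The basic entourage `E_F` determined by a set `F` of permutations of `X`. -/
def permEnt (F : Set (Equiv.Perm X)) : Set (X × X) :=
  {p | p.2 = p.1 ∨ ∃ g ∈ F, p.2 = g p.1}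

/-- The coarse structure `𝓔_G` generated by a set (group) `S` of permutations of `X`:
all entourages contained in `E_F` for some finite `F ⊆ S`. -/
def permCoarse (S : Set (Equiv.Perm X)) : Set (Set (X × X)) :=
  {E | IsEntourage E ∧ ∃ F : Finset (Equiv.Perm X),
    (F : Set (Equiv.Perm X)) ⊆ S ∧ E ⊆ permEnt (F : Set (Equiv.Perm X))}

variable {M : Type v} [MetricSpace M]

/-- A function `φ : X → M` is slowly oscillating. -/
def SlowlyOscillating (𝓔 : Set (Set (X × X))) (φ : X → M) : Prop :=
  ∀ ε : ℝ, 0 < ε → ∀ E ∈ 𝓔, ∃ B : Set X, IsBoundedSet 𝓔 B ∧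
    ∀ x : X, x ∉ B → EMetric.diam (φ '' entBall E x) < ENNReal.ofReal ε

/-- Two sets are asymptotically separated if `E[A] ∩ E[B]` is bounded for every `E ∈ 𝓔`. -/
def AsymptoticallySeparated (𝓔 : Set (Set (X × X))) (A B : Set X) : Prop :=
  ∀ E ∈ 𝓔, IsBoundedSet 𝓔 ((⋃ a ∈ A, entBall E a) ∩ ⋃ b ∈ B, entBall E b)

/-- A coarse space `(X, 𝓔)` is `M`-normal. -/
def IsCoarseNormal (𝓔 : Set (Set (X × X))) (M : Type v) [MetricSpace M] : Prop :=
  ∀ A B : Set X, A.Nonempty → B.Nonempty → Disjoint A B →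
    AsymptoticallySeparated 𝓔 A B →
    ∃ φ : X → M, SlowlyOscillating 𝓔 φ ∧
      ∃ ε : ℝ, 0 < ε ∧ ∀ a ∈ A, ∀ b ∈ B, ε ≤ dist (φ a) (φ b)

/-- `so(X,𝓔;M)`: the bounded slowly oscillating functions `X → M`. -/
def soSet (𝓔 : Set (Set (X × X))) (M : Type v) [MetricSpace M] : Set (X → M) :=
  {φ | Bornology.IsBounded (Set.range φ) ∧ SlowlyOscillating 𝓔 φ}

/-- The canonical map `δ_M : X → M^{so(X,𝓔;M)}`. -/
def deltaMap (𝓔 : Set (Set (X × X))) (M : Type v) [MetricSpace M] :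
    X → (↥(soSet 𝓔 M) → M) := fun x f => f.1 x

/-- The underlying set of the `M`-compactification: the closure of `δ_M(X)`. -/
def hCompSet (𝓔 : Set (Set (X × X))) (M : Type v) [MetricSpace M] :
    Set (↥(soSet 𝓔 M) → M) := closure (Set.range (deltaMap 𝓔 M))

/-- The `M`-compactification `h_M(X,𝓔)` of the coarse space `(X,𝓔)`. -/
abbrev HComp (𝓔 : Set (Set (X × X))) (M : Type v) [MetricSpace M] :=
  ↥(hCompSet 𝓔 M)

/-- The copy of a point `x ∈ X` inside the `M`-compactification. -/
def deltaEmb (𝓔 : Set (Set (X × X))) (M : Type v) [MetricSpace M] (x : X) :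
    HComp 𝓔 M := ⟨deltaMap 𝓔 M x, subset_closure (Set.mem_range_self x)⟩

/-- The permutation group `G_{X, h_M(X,𝓔)}` of the `M`-compactification, as a set of
permutations of `X` (`X` being identified with the set of isolated points of `h_M(X,𝓔)`
via `δ_M`): those permutations induced by homeomorphisms of `h_M(X,𝓔)` fixing all
points outside (the image of) `X`. -/
def hPermGroup (𝓔 : Set (Set (X × X))) (M : Type v) [MetricSpace M] :
    Set (Equiv.Perm X) :=
  {σ | ∃ h : HComp 𝓔 M ≃ₜ HComp 𝓔 M,
    (∀ z : HComp 𝓔 M, z ∉ Set.range (deltaEmb 𝓔 M) → h z = z) ∧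
    ∀ x : X, h (deltaEmb 𝓔 M x) = deltaEmb 𝓔 M (σ x)}

end CoarsePreamble

section TopPreamble

/-- The set of isolated points of a topological space. -/
def isolatedPoints (K : Type w) [TopologicalSpace K] : Set K :=
  {x | IsOpen ({x} : Set K)}

/-- A compactification: a compact Hausdorff space with dense set of isolated points. -/
def IsCompactification (K : Type w) [TopologicalSpace K] : Prop :=
  CompactSpace K ∧ T2Space K ∧ Dense (isolatedPoints K)

/-- The permutation group `G_{K',K}` of a compactification `K`: permutations of the
set `K'` of isolated points induced by homeomorphisms of `K` fixing `K \ K'` pointwise. -/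
def homeoPerms (K : Type w) [TopologicalSpace K] :
    Set (Equiv.Perm ↥(isolatedPoints K)) :=
  {σ | ∃ h : K ≃ₜ K, (∀ z : K, z ∉ isolatedPoints K → h z = z) ∧
    ∀ x : ↥(isolatedPoints K), h x.val = (σ x).val}

/-- The oscillation of `φ : K' → M` at a point `z ∈ K`. -/
noncomputable def oscAt {K : Type w} [TopologicalSpace K] {M : Type v} [MetricSpace M]
    (φ : ↥(isolatedPoints K) → M) (z : K) : ENNReal :=
  ⨅ (O : Set K) (_ : IsOpen O) (_ : z ∈ O),
    EMetric.diam (φ '' (Subtype.val ⁻¹' O))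

/-- A compactification `K` is `M`-soft. -/
def IsMSoft (K : Type w) [TopologicalSpace K] (M : Type v) [MetricSpace M] : Prop :=
  ∀ φ : ↥(isolatedPoints K) → M, Bornology.IsBounded (Set.range φ) →
    (∃ z : K, 0 < oscAt φ z) →
    ∃ σ ∈ homeoPerms K, ∃ ε : ℝ, 0 < ε ∧
      {x : ↥(isolatedPoints K) | ε ≤ dist (φ (σ x)) (φ x)}.Infinite

/-- A compactification `K` is soft. -/
def IsSoft (K : Type w) [TopologicalSpace K] : Prop :=
  ∀ A B : Set ↥(isolatedPoints K), Disjoint A B →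
    (closure (Subtype.val '' A) ∩ closure (Subtype.val '' B)).Nonempty →
    ∃ σ ∈ homeoPerms K, {x : ↥(isolatedPoints K) | x ∈ A ∧ σ x ∈ B}.Infinite

/-- `uc(K',K;M)`: restrictions to the set of isolated points of continuous functions `K → M`. -/
def ucSet (K : Type w) [TopologicalSpace K] (M : Type v) [MetricSpace M] :
    Set (↥(isolatedPoints K) → M) :=
  {φ | ∃ f : K → M, Continuous f ∧ ∀ x : ↥(isolatedPoints K), f x.val = φ x}

/-- `uc(X, h_M(X,𝓔); M)`: restrictions to `X` (via `δ_M`) of continuous functions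
`h_M(X,𝓔) → M`. -/
def ucHComp {X : Type u} (𝓔 : Set (Set (X × X))) (M : Type v) [MetricSpace M] :
    Set (X → M) :=
  {φ | ∃ f : HComp 𝓔 M → M, Continuous f ∧ ∀ x : X, f (deltaEmb 𝓔 M x) = φ x}

/-- The cardinal `Δ`: the smallest cardinality of a base of a cellular finitary coarse
structure on `ω` containing no infinite discrete subsets. -/
noncomputable def smallDeltaCard : Cardinal.{0} :=
  sInf {c : Cardinal.{0} | ∃ 𝓔 : Set (Set (ℕ × ℕ)), IsCoarseStructure 𝓔 ∧
    IsCellularCoarse 𝓔 ∧ IsFinitaryCoarse 𝓔 ∧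
    (∀ D : Set ℕ, IsCoarseDiscrete 𝓔 D → D.Finite) ∧
    ∃ 𝓑 : Set (Set (ℕ × ℕ)), IsCoarseBase 𝓔 𝓑 ∧ Cardinal.mk ↥𝓑 = c}

/-- The cardinal `𝔭`. -/
noncomputable def pCard : Cardinal.{0} :=
  sInf {c : Cardinal.{0} | ∃ F : Set (Set ℕ), (∀ A ∈ F, A.Infinite) ∧
    (∀ S : Finset (Set ℕ), (S : Set (Set ℕ)) ⊆ F → (⋂ A ∈ S, A).Infinite) ∧
    (∀ I : Set ℕ, I.Infinite → ∃ A ∈ F, (I \ A).Infinite) ∧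
    Cardinal.mk ↥F = c}

/-- The character `χ(x;K)` of a point. -/
noncomputable def charAt (K : Type w) [TopologicalSpace K] (x : K) : Cardinal.{w} :=
  sInf {c : Cardinal.{w} | ∃ 𝓑 : Set (Set K), (∀ U ∈ 𝓑, IsOpen U ∧ x ∈ U) ∧
    (∀ V : Set K, IsOpen V → x ∈ V → ∃ U ∈ 𝓑, U ⊆ V) ∧ Cardinal.mk ↥𝓑 = c}

/-- The character `χ(K)` of a space. -/
noncomputable def spaceChar (K : Type w) [TopologicalSpace K] : Cardinal.{w} :=
  ⨆ x : K, charAt K x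

/-- A corona: a compact Hausdorff space homeomorphic to the remainder of a
compactification of the countable discrete space `ℕ`. -/
def IsCorona (K : Type w) [TopologicalSpace K] : Prop :=
  CompactSpace K ∧ T2Space K ∧
    ∃ (C : Type w) (_ : TopologicalSpace C), IsCompactification C ∧
      (isolatedPoints C).Infinite ∧ (isolatedPoints C).Countable ∧
      Nonempty (K ≃ₜ ↥((isolatedPoints C)ᶜ))

/-- A soft corona. -/
def IsSoftCorona (K : Type w) [TopologicalSpace K] : Prop :=
  CompactSpace K ∧ T2Space K ∧
    ∃ (C : Type w) (_ : TopologicalSpace C), IsCompactification C ∧ IsSoft C ∧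
      (isolatedPoints C).Infinite ∧ (isolatedPoints C).Countable ∧
      Nonempty (K ≃ₜ ↥((isolatedPoints C)ᶜ))

/-- An `M`-soft corona. -/
def IsMSoftCorona (K : Type w) [TopologicalSpace K] (M : Type v) [MetricSpace M] : Prop :=
  CompactSpace K ∧ T2Space K ∧
    ∃ (C : Type w) (_ : TopologicalSpace C), IsCompactification C ∧ IsMSoft C M ∧
      (isolatedPoints C).Infinite ∧ (isolatedPoints C).Countable ∧
      Nonempty (K ≃ₜ ↥((isolatedPoints C)ᶜ))

end TopPreamble


/-!
For any permutation `π` of `ℕ`, the map sending `x n` to `x (π n)` and fixing every other point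
is a homeomorphism of `K`: near the limit `z` it sends terms of large index to terms of large
index, and every other non-isolated point has a neighbourhood missing the closed set
`{z} ∪ {x n | n}`. When `π` has no fixed point, its restriction to `K'` lies in `G_{K',K}` but
moves every `x n`.
-/

section ReindexConvergentSeq

variable {K : Type u} [TopologicalSpace K]

theorem Homeomorph.apply_mem_isolatedPoints_iff (h : K ≃ₜ K) {y : K} :
    h y ∈ isolatedPoints K ↔ y ∈ isolatedPoints K := by
  simp only [isolatedPoints, mem_ofPred_eq, ← image_singleton, h.isOpen_image]

theorem exists_mem_homeoPerms (h : K ≃ₜ K) (hfix : ∀ y ∉ isolatedPoints K, h y = y) :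
    ∃ σ ∈ homeoPerms K, ∀ y, (σ y).val = h y.val :=
  ⟨Equiv.Perm.subtypePerm h.toEquiv fun _ => h.apply_mem_isolatedPoints_iff,
    ⟨h, hfix, fun _ => rfl⟩, fun _ => rfl⟩

theorem continuousAt_of_mem_isolatedPoints {Y : Type*} [TopologicalSpace Y] {f : K → Y}
    {y : K} (hy : y ∈ isolatedPoints K) : ContinuousAt f y := by
  rw [ContinuousAt, (isOpen_singleton_iff_nhds_eq_pure y).mp hy]
  exact tendsto_pure_nhds f y

variable [T1Space K] {x : ℕ → K} {z : K} {π : ℕ → ℕ} {f : K → K}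

theorem continuousAt_of_reindex_tendsto (hconv : Tendsto x atTop (𝓝 z))
    (hπ : Tendsto π atTop atTop) (hf_seq : ∀ n, f (x n) = x (π n))
    (hf_off : ∀ y ∉ range x, f y = y) (hz : z ∉ range x) : ContinuousAt f z := by
  rw [ContinuousAt, hf_off z hz, tendsto_nhds]
  intro V hV hzV
  obtain ⟨N, hN⟩ := eventually_atTop.mp (hconv.eventually (hV.mem_nhds hzV))
  obtain ⟨M, hM⟩ := eventually_atTop.mp (hπ.eventually_ge_atTop N)
  have hhead : (x '' Iio M)ᶜ ∈ 𝓝 z := by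
    refine ((finite_Iio M).image x).isClosed.isOpen_compl.mem_nhds ?_
    exact fun hmem => hz (image_subset_range x _ hmem)
  filter_upwards [hV.mem_nhds hzV, hhead] with u huV hu
  by_cases hur : u ∈ range x
  · obtain ⟨n, rfl⟩ := hur
    have hMn : M ≤ n := not_lt.mp fun hn => hu (mem_image_of_mem x hn)
    rw [mem_preimage, hf_seq]
    exact hN (π n) (hM n hMn)
  · rwa [mem_preimage, hf_off u hur]

theorem continuous_of_reindex_convergent_seq [T2Space K]
    (hiso : ∀ n, x n ∈ isolatedPoints K) (hconv : Tendsto x atTop (𝓝 z))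
    (hπ : Tendsto π atTop atTop) (hf_seq : ∀ n, f (x n) = x (π n))
    (hf_off : ∀ y ∉ range x, f y = y) : Continuous f := by
  refine continuous_iff_continuousAt.mpr fun y => ?_
  by_cases hy : y ∈ isolatedPoints K
  · exact continuousAt_of_mem_isolatedPoints hy
  have hyr : y ∉ range x := by
    rintro ⟨n, rfl⟩
    exact hy (hiso n)
  by_cases hyz : y = z
  · subst hyz
    exact continuousAt_of_reindex_tendsto hconv hπ hf_seq hf_off hyr
  · have hclosed : IsClosed (insert z (range x)) := hconv.isCompact_insert_range.isClosed
    have hfy : f =ᶠ[𝓝 y] id := by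
      filter_upwards [hclosed.isOpen_compl.mem_nhds (by simp [hyz, hyr])] with u hu
      exact hf_off u fun hur => hu (mem_insert_of_mem z hur)
    exact continuousAt_id.congr hfy.symm

theorem exists_homeomorph_apply_seq [T2Space K] (hx : Function.Injective x)
    (hiso : ∀ n, x n ∈ isolatedPoints K) (hconv : Tendsto x atTop (𝓝 z)) (π : Equiv.Perm ℕ) :
    ∃ h : K ≃ₜ K, (∀ n, h (x n) = x (π n)) ∧ ∀ y ∉ range x, h y = y := by
  let ι : ℕ ↪ K := ⟨x, hx⟩
  have hcont : ∀ τ : Equiv.Perm ℕ, Continuous (τ.viaEmbedding ι) := fun τ =>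
    continuous_of_reindex_convergent_seq hiso hconv τ.injective.nat_tendsto_atTop
      (τ.viaEmbedding_apply ι) (τ.viaEmbedding_apply_of_notMem ι)
  exact ⟨⟨π.viaEmbedding ι, hcont π, hcont π.symm⟩, π.viaEmbedding_apply ι,
    π.viaEmbedding_apply_of_notMem ι⟩

end ReindexConvergentSeq

theorem Equiv.Perm.exists_nat_forall_apply_ne : ∃ π : Equiv.Perm ℕ, ∀ n, π n ≠ n := by
  refine ⟨Equiv.natSumNatEquivNat.permCongr (Equiv.sumComm ℕ ℕ), fun n hn => ?_⟩
  obtain ⟨a, rfl⟩ := Equiv.natSumNatEquivNat.surjective n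
  rcases a with m | m <;> simp [Equiv.permCongr_apply] at hn

theorem statement17_general (K : Type u) [TopologicalSpace K] (hK : IsCompactification K)
    (x : ℕ → ↥(isolatedPoints K)) (hx : Function.Injective x) (z : K)
    (hconv : Filter.Tendsto (fun n => (x n).val) Filter.atTop (nhds z)) :
    homeoPerms K ≠
      {σ : Equiv.Perm ↥(isolatedPoints K) | {y : ↥(isolatedPoints K) | σ y ≠ y}.Finite} := by
  obtain ⟨-, hT2, -⟩ := hK
  obtain ⟨π, hπ⟩ := Equiv.Perm.exists_nat_forall_apply_ne
  obtain ⟨h, h_seq, h_off⟩ := exists_homeomorph_apply_seq (x := fun n => (x n).val)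
    (Subtype.val_injective.comp hx) (fun n => (x n).2) hconv π
  obtain ⟨σ, hσ, hσh⟩ := exists_mem_homeoPerms h fun y hy =>
    h_off y fun ⟨n, hn⟩ => hy (hn ▸ (x n).2)
  have hmoves : ∀ n, x n ∈ {y | σ y ≠ y} := fun n hfix =>
    hπ n (hx (Subtype.val_injective (by rw [← h_seq, ← hσh, hfix])))
  intro heq
  rw [heq] at hσ
  exact infinite_of_injective_forall_mem hx hmoves hσ

/-- If an infinite compactification `K` contains a sequence of pairwise
distinct isolated points converging to a point of `K`, then `G_{K',K} ≠ FS_{K'}`. -/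
theorem statement17 (K : Type u) [TopologicalSpace K] (hK : IsCompactification K)
    (hinf : Infinite K)
    (x : ℕ → ↥(isolatedPoints K)) (hx : Function.Injective x) (z : K)
    (hconv : Filter.Tendsto (fun n => (x n).val) Filter.atTop (nhds z)) :
    homeoPerms K ≠
      {σ : Equiv.Perm ↥(isolatedPoints K) | {y : ↥(isolatedPoints K) | σ y ≠ y}.Finite} :=
  statement17_general K hK x hx z hconv
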